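/- (Differential equation (A6) for the coordinate functions x, y, z of the Ree curve.) For each p ∈ {p_x, p_y, p_z}, the identity ℓ * D^(q*q0+1) p + D^(q*q0) p = ℓ^q * (ℓ^q0 * D^(2q0+1) p - D^(q0+1) p) holds in F[X]. -/
import Mathlib

noncomputable section

open Polynomial

abbrev F := ZMod 3

def q0 (s : ℕ) : ℕ := 3 ^ s
def q (s : ℕ) : ℕ := 3 ^ (2 * s + 1)

def pX : Polynomial F := X
def pY (s : ℕ) : Polynomial F :=
  X ^ (q0 s + 1) - X ^ (q s + q0 s) + X ^ (q s * (q0 s + 1)) - X ^ (q s * (q s + q0 s))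
def pZ (s : ℕ) : Polynomial F :=
  X ^ (2 * q0 s + 1) - X ^ (q s + 2 * q0 s) + X ^ (q s * (2 * q0 s + 1)) - X ^ (q s * (q s + 2 * q0 s))
def ell (s : ℕ) : Polynomial F := X ^ q s - X

lemma hd_pow (k n : ℕ) : hasseDeriv k (X ^ n : Polynomial F) = C ((n.choose k : F)) * X ^ (n - k) := by
  rw [C_mul_X_pow_eq_monomial, ← one_mul (X ^ n), ← C_1, C_mul_X_pow_eq_monomial,
    hasseDeriv_monomial, mul_one]

lemma step3 (n k : ℕ) :
    ((n.choose k : F)) = ((n % 3).choose (k % 3) : F) * ((n / 3).choose (k / 3) : F) := by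
  have h := Choose.choose_modEq_choose_mod_mul_choose_div_nat (p := 3) (n := n) (k := k)
  have h2 := (ZMod.natCast_eq_natCast_iff _ _ _).mpr h
  push_cast at h2
  exact h2

lemma lucas3 (t a b c d : ℕ) (hb : b < 3 ^ t) (hd : d < 3 ^ t) :
    (((a * 3 ^ t + b).choose (c * 3 ^ t + d) : F)) = (a.choose c : F) * (b.choose d : F) := by
  induction t generalizing b d with
  | zero =>
    simp only [pow_zero] at hb hd
    interval_cases b
    interval_cases d
    simp
  | succ t ih =>
    have h3 : (3:ℕ) ^ (t+1) = 3 ^ t * 3 := pow_succ 3 t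
    rw [h3] at hb hd ⊢
    have e1 : (a * (3 ^ t * 3) + b) % 3 = b % 3 := by
      rw [show a * (3 ^ t * 3) = (a * 3 ^ t) * 3 by ring]; omega
    have e2 : (a * (3 ^ t * 3) + b) / 3 = a * 3 ^ t + b / 3 := by
      rw [show a * (3 ^ t * 3) = (a * 3 ^ t) * 3 by ring]; omega
    have e3 : (c * (3 ^ t * 3) + d) % 3 = d % 3 := by
      rw [show c * (3 ^ t * 3) = (c * 3 ^ t) * 3 by ring]; omega
    have e4 : (c * (3 ^ t * 3) + d) / 3 = c * 3 ^ t + d / 3 := by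
      rw [show c * (3 ^ t * 3) = (c * 3 ^ t) * 3 by ring]; omega
    rw [step3 (a * (3 ^ t * 3) + b), e1, e2, e3, e4, step3 b d,
      ih (b / 3) (d / 3) (by omega) (by omega)]
    ring

lemma cz (t a c : ℕ) (ht : 1 < 3 ^ t) : (((a * 3 ^ t).choose (c * 3 ^ t + 1)) : F) = 0 := by
  have h := lucas3 t a 0 c 1 (by omega) ht
  simpa using h

lemma cast3pow (m : ℕ) (hm : m ≠ 0) : ((3 ^ m : ℕ) : F) = 0 := by
  push_cast
  rw [show (3:F) = 0 by decide]
  exact zero_pow hm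

lemma castq (s : ℕ) : ((q s : ℕ) : F) = 0 := cast3pow _ (by omega)

lemma C2 : (C (2:F)) = -1 := by rw [show (2:F) = -1 by decide, map_neg, map_one]

lemma bounds (s : ℕ) (hs : 1 ≤ s) : q s + 2 * q0 s + 1 < 3 ^ (3*s+1) := by
  have a1 : (3:ℕ)^s ≤ 3^(2*s) := Nat.pow_le_pow_right (by norm_num) (by omega)
  have a3 : (3:ℕ)^(2*s+2) ≤ 3^(3*s+1) := Nat.pow_le_pow_right (by norm_num) (by omega)
  have p1 : (3:ℕ)^(2*s+1) = 3^(2*s)*3 := pow_succ 3 (2*s)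
  have p2 : (3:ℕ)^(2*s+2) = 3^(2*s+1)*3 := pow_succ 3 (2*s+1)
  have a2 : (1:ℕ) ≤ 3^(2*s) := Nat.one_le_pow _ _ (by norm_num)
  simp only [q, q0]
  omega

lemma one_lt_3s (s : ℕ) (hs : 1 ≤ s) : 1 < 3 ^ s :=
  Nat.one_lt_pow (by omega) (by norm_num)

lemma hT (s : ℕ) : q s * q0 s = 3 ^ (3*s+1) := by simp only [q, q0]; ring

-- derivatives of pY

lemma hdC_pY (s : ℕ) (hs : 1 ≤ s) :
    hasseDeriv (q s * q0 s) (pY s) = X ^ q s - X ^ (q s * q s) := by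
  have bd := bounds s hs
  have ht := hT s
  have hq0 : 1 ≤ q0 s := Nat.one_le_pow _ _ (by norm_num)
  have hq1 : 1 ≤ q s := Nat.one_le_pow _ _ (by norm_num)
  rw [pY, map_sub, map_add, map_sub, hd_pow, hd_pow, hd_pow, hd_pow,
    Nat.choose_eq_zero_of_lt (show q0 s + 1 < q s * q0 s by omega),
    Nat.choose_eq_zero_of_lt (show q s + q0 s < q s * q0 s by omega)]
  have c3 : ((q s * (q0 s + 1)).choose (q s * q0 s) : F) = 1 := by
    rw [show q s * (q0 s + 1) = 1 * 3^(3*s+1) + q s by simp only [q, q0]; ring,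
        show q s * q0 s = 1 * 3^(3*s+1) + 0 by simp only [q, q0]; ring,
        lucas3 _ _ _ _ _ (by omega) (by omega)]
    simp
  have c4 : ((q s * (q s + q0 s)).choose (q s * q0 s) : F) = 1 := by
    rw [show q s * (q s + q0 s) = (3^(s+1)+1) * 3^(3*s+1) + 0 by simp only [q, q0]; ring,
        show q s * q0 s = 1 * 3^(3*s+1) + 0 by simp only [q, q0]; ring,
        lucas3 _ _ _ _ _ (by omega) (by omega)]
    rw [Nat.choose_one_right, Nat.choose_self, Nat.cast_add, cast3pow _ (by omega)]
    simp
  rw [c3, c4,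
    show q s * (q0 s + 1) - q s * q0 s = q s by
      rw [show q s * (q0 s + 1) = q s * q0 s + q s by ring]; omega,
    show q s * (q s + q0 s) - q s * q0 s = q s * q s by
      rw [show q s * (q s + q0 s) = q s * q0 s + q s * q s by ring]; omega]
  simp

lemma hdC1_pY (s : ℕ) (hs : 1 ≤ s) :
    hasseDeriv (q s * q0 s + 1) (pY s) = 0 := by
  have bd := bounds s hs
  have ht := hT s
  have hq0 : 1 ≤ q0 s := Nat.one_le_pow _ _ (by norm_num)
  have hq1 : 1 ≤ q s := Nat.one_le_pow _ _ (by norm_num)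
  rw [pY, map_sub, map_add, map_sub, hd_pow, hd_pow, hd_pow, hd_pow,
    Nat.choose_eq_zero_of_lt (show q0 s + 1 < q s * q0 s + 1 by omega),
    Nat.choose_eq_zero_of_lt (show q s + q0 s < q s * q0 s + 1 by omega)]
  have c3 : ((q s * (q0 s + 1)).choose (q s * q0 s + 1) : F) = 0 := by
    rw [show q s * (q0 s + 1) = 1 * 3^(3*s+1) + q s by simp only [q, q0]; ring,
        show q s * q0 s + 1 = 1 * 3^(3*s+1) + 1 by omega,
        lucas3 _ _ _ _ _ (by omega) (by omega),
        Nat.choose_self, Nat.choose_one_right, castq]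
    simp
  have c4 : ((q s * (q s + q0 s)).choose (q s * q0 s + 1) : F) = 0 := by
    rw [show q s * (q s + q0 s) = (3^(s+1)+1) * 3^(3*s+1) by simp only [q, q0]; ring,
        show q s * q0 s + 1 = 1 * 3^(3*s+1) + 1 by omega]
    exact cz _ _ _ (by omega)
  rw [c3, c4]
  simp

lemma hd2A1_pY (s : ℕ) (hs : 1 ≤ s) :
    hasseDeriv (2 * q0 s + 1) (pY s) = 0 := by
  have h1 := one_lt_3s s hs
  have hq0 : 1 ≤ q0 s := Nat.one_le_pow _ _ (by norm_num)
  rw [pY, map_sub, map_add, map_sub, hd_pow, hd_pow, hd_pow, hd_pow,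
    Nat.choose_eq_zero_of_lt (show q0 s + 1 < 2 * q0 s + 1 by omega)]
  have c2 : ((q s + q0 s).choose (2 * q0 s + 1) : F) = 0 := by
    rw [show q s + q0 s = (3^(s+1)+1) * 3^s by simp only [q, q0]; ring,
        show 2 * q0 s + 1 = 2 * 3^s + 1 by simp only [q0]]
    exact cz _ _ _ h1
  have c3 : ((q s * (q0 s + 1)).choose (2 * q0 s + 1) : F) = 0 := by
    rw [show q s * (q0 s + 1) = (3^(2*s+1)+3^(s+1)) * 3^s by simp only [q, q0]; ring,
        show 2 * q0 s + 1 = 2 * 3^s + 1 by simp only [q0]]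
    exact cz _ _ _ h1
  have c4 : ((q s * (q s + q0 s)).choose (2 * q0 s + 1) : F) = 0 := by
    rw [show q s * (q s + q0 s) = (3^(3*s+2)+3^(2*s+1)) * 3^s by simp only [q, q0]; ring,
        show 2 * q0 s + 1 = 2 * 3^s + 1 by simp only [q0]]
    exact cz _ _ _ h1
  rw [c2, c3, c4]
  simp

lemma hdA1_pY (s : ℕ) (hs : 1 ≤ s) :
    hasseDeriv (q0 s + 1) (pY s) = 1 := by
  have h1 := one_lt_3s s hs
  rw [pY, map_sub, map_add, map_sub, hd_pow, hd_pow, hd_pow, hd_pow, Nat.choose_self]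
  have c2 : ((q s + q0 s).choose (q0 s + 1) : F) = 0 := by
    rw [show q s + q0 s = (3^(s+1)+1) * 3^s by simp only [q, q0]; ring,
        show q0 s + 1 = 1 * 3^s + 1 by simp only [q0]; ring]
    exact cz _ _ _ h1
  have c3 : ((q s * (q0 s + 1)).choose (q0 s + 1) : F) = 0 := by
    rw [show q s * (q0 s + 1) = (3^(2*s+1)+3^(s+1)) * 3^s by simp only [q, q0]; ring,
        show q0 s + 1 = 1 * 3^s + 1 by simp only [q0]; ring]
    exact cz _ _ _ h1
  have c4 : ((q s * (q s + q0 s)).choose (q0 s + 1) : F) = 0 := by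
    rw [show q s * (q s + q0 s) = (3^(3*s+2)+3^(2*s+1)) * 3^s by simp only [q, q0]; ring,
        show q0 s + 1 = 1 * 3^s + 1 by simp only [q0]; ring]
    exact cz _ _ _ h1
  rw [c2, c3, c4]
  simp

-- derivatives of pZ

lemma hdC_pZ (s : ℕ) (hs : 1 ≤ s) :
    hasseDeriv (q s * q0 s) (pZ s) = X ^ (q s * (q s + q0 s)) - X ^ (q s * (q0 s + 1)) := by
  have bd := bounds s hs
  have ht := hT s
  have hq0 : 1 ≤ q0 s := Nat.one_le_pow _ _ (by norm_num)
  have hq1 : 1 ≤ q s := Nat.one_le_pow _ _ (by norm_num)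
  rw [pZ, map_sub, map_add, map_sub, hd_pow, hd_pow, hd_pow, hd_pow,
    Nat.choose_eq_zero_of_lt (show 2 * q0 s + 1 < q s * q0 s by omega),
    Nat.choose_eq_zero_of_lt (show q s + 2 * q0 s < q s * q0 s by omega)]
  have c3 : ((q s * (2 * q0 s + 1)).choose (q s * q0 s) : F) = 2 := by
    rw [show q s * (2 * q0 s + 1) = 2 * 3^(3*s+1) + q s by simp only [q, q0]; ring,
        show q s * q0 s = 1 * 3^(3*s+1) + 0 by simp only [q, q0]; ring,
        lucas3 _ _ _ _ _ (by omega) (by omega)]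
    simp
  have c4 : ((q s * (q s + 2 * q0 s)).choose (q s * q0 s) : F) = 2 := by
    rw [show q s * (q s + 2 * q0 s) = (3^(s+1)+2) * 3^(3*s+1) + 0 by simp only [q, q0]; ring,
        show q s * q0 s = 1 * 3^(3*s+1) + 0 by simp only [q, q0]; ring,
        lucas3 _ _ _ _ _ (by omega) (by omega)]
    rw [Nat.choose_one_right, Nat.choose_self, Nat.cast_add, cast3pow _ (by omega)]
    simp
  rw [c3, c4,
    show q s * (2 * q0 s + 1) - q s * q0 s = q s * (q0 s + 1) by
      rw [show q s * (2 * q0 s + 1) = q s * q0 s + q s * (q0 s + 1) by ring]; omega,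
    show q s * (q s + 2 * q0 s) - q s * q0 s = q s * (q s + q0 s) by
      rw [show q s * (q s + 2 * q0 s) = q s * q0 s + q s * (q s + q0 s) by ring]; omega,
    C2]
  simp
  ring

lemma hdC1_pZ (s : ℕ) (hs : 1 ≤ s) :
    hasseDeriv (q s * q0 s + 1) (pZ s) = 0 := by
  have bd := bounds s hs
  have ht := hT s
  have hq0 : 1 ≤ q0 s := Nat.one_le_pow _ _ (by norm_num)
  have hq1 : 1 ≤ q s := Nat.one_le_pow _ _ (by norm_num)
  rw [pZ, map_sub, map_add, map_sub, hd_pow, hd_pow, hd_pow, hd_pow,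
    Nat.choose_eq_zero_of_lt (show 2 * q0 s + 1 < q s * q0 s + 1 by omega),
    Nat.choose_eq_zero_of_lt (show q s + 2 * q0 s < q s * q0 s + 1 by omega)]
  have c3 : ((q s * (2 * q0 s + 1)).choose (q s * q0 s + 1) : F) = 0 := by
    rw [show q s * (2 * q0 s + 1) = 2 * 3^(3*s+1) + q s by simp only [q, q0]; ring,
        show q s * q0 s + 1 = 1 * 3^(3*s+1) + 1 by omega,
        lucas3 _ _ _ _ _ (by omega) (by omega),
        Nat.choose_one_right, Nat.choose_one_right, castq]
    simp
  have c4 : ((q s * (q s + 2 * q0 s)).choose (q s * q0 s + 1) : F) = 0 := by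
    rw [show q s * (q s + 2 * q0 s) = (3^(s+1)+2) * 3^(3*s+1) by simp only [q, q0]; ring,
        show q s * q0 s + 1 = 1 * 3^(3*s+1) + 1 by omega]
    exact cz _ _ _ (by omega)
  rw [c3, c4]
  simp

lemma hd2A1_pZ (s : ℕ) (hs : 1 ≤ s) :
    hasseDeriv (2 * q0 s + 1) (pZ s) = 1 := by
  have h1 := one_lt_3s s hs
  rw [pZ, map_sub, map_add, map_sub, hd_pow, hd_pow, hd_pow, hd_pow, Nat.choose_self]
  have c2 : ((q s + 2 * q0 s).choose (2 * q0 s + 1) : F) = 0 := by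
    rw [show q s + 2 * q0 s = (3^(s+1)+2) * 3^s by simp only [q, q0]; ring,
        show 2 * q0 s + 1 = 2 * 3^s + 1 by simp only [q0]]
    exact cz _ _ _ h1
  have c3 : ((q s * (2 * q0 s + 1)).choose (2 * q0 s + 1) : F) = 0 := by
    rw [show q s * (2 * q0 s + 1) = (2*3^(2*s+1)+3^(s+1)) * 3^s by simp only [q, q0]; ring,
        show 2 * q0 s + 1 = 2 * 3^s + 1 by simp only [q0]]
    exact cz _ _ _ h1
  have c4 : ((q s * (q s + 2 * q0 s)).choose (2 * q0 s + 1) : F) = 0 := by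
    rw [show q s * (q s + 2 * q0 s) = (3^(3*s+2)+2*3^(2*s+1)) * 3^s by simp only [q, q0]; ring,
        show 2 * q0 s + 1 = 2 * 3^s + 1 by simp only [q0]]
    exact cz _ _ _ h1
  rw [c2, c3, c4]
  simp

lemma hdA1_pZ (s : ℕ) (hs : 1 ≤ s) :
    hasseDeriv (q0 s + 1) (pZ s) = - X ^ (q0 s) := by
  have h1 := one_lt_3s s hs
  rw [pZ, map_sub, map_add, map_sub, hd_pow, hd_pow, hd_pow, hd_pow]
  have c1 : ((2 * q0 s + 1).choose (q0 s + 1) : F) = 2 := by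
    rw [show 2 * q0 s + 1 = 2 * 3^s + 1 by simp only [q0],
        show q0 s + 1 = 1 * 3^s + 1 by simp only [q0]; ring,
        lucas3 _ _ _ _ _ h1 h1]
    simp
  have c2 : ((q s + 2 * q0 s).choose (q0 s + 1) : F) = 0 := by
    rw [show q s + 2 * q0 s = (3^(s+1)+2) * 3^s by simp only [q, q0]; ring,
        show q0 s + 1 = 1 * 3^s + 1 by simp only [q0]; ring]
    exact cz _ _ _ h1
  have c3 : ((q s * (2 * q0 s + 1)).choose (q0 s + 1) : F) = 0 := by
    rw [show q s * (2 * q0 s + 1) = (2*3^(2*s+1)+3^(s+1)) * 3^s by simp only [q, q0]; ring,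
        show q0 s + 1 = 1 * 3^s + 1 by simp only [q0]; ring]
    exact cz _ _ _ h1
  have c4 : ((q s * (q s + 2 * q0 s)).choose (q0 s + 1) : F) = 0 := by
    rw [show q s * (q s + 2 * q0 s) = (3^(3*s+2)+2*3^(2*s+1)) * 3^s by simp only [q, q0]; ring,
        show q0 s + 1 = 1 * 3^s + 1 by simp only [q0]; ring]
    exact cz _ _ _ h1
  rw [c1, c2, c3, c4, show 2 * q0 s + 1 - (q0 s + 1) = q0 s by omega, C2]
  simp

lemma hd_pX (k : ℕ) (hk : 2 ≤ k) : hasseDeriv k pX = 0 := by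
  rw [pX, ← pow_one (X : Polynomial F), hd_pow,
    Nat.choose_eq_zero_of_lt (by omega)]
  simp

lemma ellq (s : ℕ) : ell s ^ q s = X ^ (q s * q s) - X ^ q s := by
  simp only [ell, q]
  rw [sub_pow_char_pow, ← pow_mul]

lemma ellq0 (s : ℕ) : ell s ^ q0 s = X ^ (q s * q0 s) - X ^ q0 s := by
  simp only [ell, q, q0]
  rw [sub_pow_char_pow, ← pow_mul]

theorem stmt12 (s : ℕ) (hs : 1 ≤ s) (p : Polynomial F)
    (hp : p = pX ∨ p = pY s ∨ p = pZ s) :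
    ell s * hasseDeriv (q s * q0 s + 1) p + hasseDeriv (q s * q0 s) p
    = ell s ^ q s * (ell s ^ q0 s * hasseDeriv (2 * q0 s + 1) p - hasseDeriv (q0 s + 1) p) := by
  have hq0 : 1 ≤ q0 s := Nat.one_le_pow _ _ (by norm_num)
  have hq1 : 3 ≤ q s := by
    have : (3:ℕ)^1 ≤ 3^(2*s+1) := Nat.pow_le_pow_right (by norm_num) (by omega)
    simpa [q] using this
  rcases hp with rfl | rfl | rfl
  · rw [hd_pX _ (by nlinarith), hd_pX _ (by nlinarith), hd_pX _ (by omega), hd_pX _ (by omega)]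
    ring
  · rw [hdC1_pY s hs, hdC_pY s hs, hd2A1_pY s hs, hdA1_pY s hs, ellq, ellq0]
    ring
  · rw [hdC1_pZ s hs, hdC_pZ s hs, hd2A1_pZ s hs, hdA1_pZ s hs, ellq, ellq0]
    ring
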